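/- For a nonnegative d×d real matrix W, tr(exp(W ∘ W)) = d if and only if the directed graph with edge set {(i,j) : W_{ij} ≠ 0} is acyclic, where ∘ denotes the Hadamard (entrywise) product. -/

import Mathlib

open Matrix
open scoped Nat

section Aux

variable {d : ℕ} {A : Matrix (Fin d) (Fin d) ℝ}

lemma pow_entry_nonneg (hA : ∀ i j, 0 ≤ A i j) :
    ∀ (n : ℕ) (i j : Fin d), 0 ≤ (A ^ n) i j := by
  intro n
  induction n with
  | zero => intro i j; by_cases h : i = j <;> simp [pow_zero, Matrix.one_apply, h]
  | succ n ih =>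
    intro i j
    rw [pow_succ, Matrix.mul_apply]
    exact Finset.sum_nonneg fun k _ => mul_nonneg (ih i k) (hA k j)

lemma pow_entry_ne_zero_transGen (hA : ∀ i j, 0 ≤ A i j) :
    ∀ (n : ℕ) (i j : Fin d), (A ^ (n + 1)) i j ≠ 0 →
      Relation.TransGen (fun i j => A i j ≠ 0) i j := by
  intro n
  induction n with
  | zero =>
    intro i j h
    rw [pow_one] at h
    exact Relation.TransGen.single h
  | succ n ih =>
    intro i j h
    rw [pow_succ, Matrix.mul_apply] at h
    obtain ⟨k, _, hk⟩ := Finset.exists_ne_zero_of_sum_ne_zero h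
    rcases mul_ne_zero_iff.1 hk with ⟨h1, h2⟩
    exact (ih i k h1).tail h2

lemma transGen_pow_entry_pos (hA : ∀ i j, 0 ≤ A i j) {i j : Fin d}
    (h : Relation.TransGen (fun i j => A i j ≠ 0) i j) :
    ∃ n : ℕ, 0 < (A ^ (n + 1)) i j := by
  induction h with
  | single h => exact ⟨0, by rw [pow_one]; exact lt_of_le_of_ne (hA _ _) (Ne.symm h)⟩
  | tail _ h ih =>
    obtain ⟨n, hn⟩ := ih
    refine ⟨n + 1, ?_⟩
    rw [pow_succ, Matrix.mul_apply]
    refine Finset.sum_pos' (fun k _ => mul_nonneg (pow_entry_nonneg hA _ _ _) (hA _ _)) ?_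
    exact ⟨_, Finset.mem_univ _, mul_pos hn (lt_of_le_of_ne (hA _ _) (Ne.symm h))⟩

end Aux

set_option maxHeartbeats 1000000 in
/-- NOTEARS characterization: for a nonnegative `d × d` real matrix `W`,
`tr (exp (W ∘ W)) = d` iff the graph with edges `{(i,j) | W i j ≠ 0}` is acyclic,
where `∘` is the Hadamard (entrywise) product. -/
theorem trace_exp_hadamard_eq_iff_acyclic
    (d : ℕ) (W : Matrix (Fin d) (Fin d) ℝ) (hW : ∀ i j, 0 ≤ W i j) :
    Matrix.trace (NormedSpace.exp (Matrix.hadamard W W)) = d ↔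
      ∀ v, ¬ Relation.TransGen (fun i j => W i j ≠ 0) v v := by
  set A : Matrix (Fin d) (Fin d) ℝ := Matrix.hadamard W W with hAdef
  have hA : ∀ i j, 0 ≤ A i j := fun i j => mul_self_nonneg _
  have hRel : (fun i j => A i j ≠ 0) = (fun i j => W i j ≠ 0) := by
    funext i j
    simp [hAdef, Matrix.hadamard_apply, mul_self_eq_zero]
  -- summability of the exponential series
  letI : SeminormedRing (Matrix (Fin d) (Fin d) ℝ) := Matrix.linftyOpSemiNormedRing
  letI : NormedRing (Matrix (Fin d) (Fin d) ℝ) := Matrix.linftyOpNormedRing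
  letI : NormedAlgebra ℝ (Matrix (Fin d) (Fin d) ℝ) := Matrix.linftyOpNormedAlgebra
  have hsum : Summable (fun n : ℕ => ((n ! : ℝ)⁻¹) • A ^ n) :=
    NormedSpace.expSeries_summable' (𝕂 := ℝ) A
  have hcont : Continuous fun M : Matrix (Fin d) (Fin d) ℝ => Matrix.trace M := by
    simp only [Matrix.trace, Matrix.diag]
    exact continuous_finset_sum _ fun i _ => ((continuous_apply i).comp (continuous_apply i))
  have hmap0 := hsum.hasSum.map (Matrix.traceLinearMap (Fin d) ℝ ℝ) hcont
  have hmap : HasSum (fun n : ℕ => ((n ! : ℝ)⁻¹) * Matrix.trace (A ^ n))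
      (Matrix.trace (∑' n : ℕ, ((n ! : ℝ)⁻¹) • A ^ n)) := by
    have heq : (⇑(Matrix.traceLinearMap (Fin d) ℝ ℝ) ∘ fun n : ℕ => ((n ! : ℝ)⁻¹) • A ^ n)
        = fun n : ℕ => ((n ! : ℝ)⁻¹) * Matrix.trace (A ^ n) := by
      funext n
      simp [Function.comp, Matrix.traceLinearMap, Matrix.trace_smul, smul_eq_mul]
    rw [heq] at hmap0
    exact hmap0
  have hgsum : Summable (fun n : ℕ => ((n ! : ℝ)⁻¹) * Matrix.trace (A ^ n)) := hmap.summable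
  have htr : Matrix.trace (NormedSpace.exp A)
      = ∑' n : ℕ, ((n ! : ℝ)⁻¹) * Matrix.trace (A ^ n) := by
    rw [NormedSpace.exp_eq_tsum (𝕂 := ℝ)]
    exact hmap.tsum_eq.symm
  have hnonneg : ∀ n : ℕ, 0 ≤ ((n ! : ℝ)⁻¹) * Matrix.trace (A ^ n) := by
    intro n
    refine mul_nonneg (by positivity) ?_
    exact Finset.sum_nonneg fun i _ => pow_entry_nonneg hA n i i
  have hzero : ((0 ! : ℝ)⁻¹) * Matrix.trace (A ^ 0) = d := by
    simp [Matrix.trace_one]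
  have hsplit := Summable.tsum_eq_zero_add hgsum
  rw [htr, hsplit, hzero]
  have htail : Summable (fun n : ℕ => (((n + 1) ! : ℝ)⁻¹) * Matrix.trace (A ^ (n + 1))) :=
    (_root_.summable_nat_add_iff (f := fun n : ℕ => ((n ! : ℝ)⁻¹) * Matrix.trace (A ^ n)) 1).2
      hgsum
  constructor
  · intro h v hv
    have h0 : (∑' n : ℕ, (((n + 1) ! : ℝ)⁻¹) * Matrix.trace (A ^ (n + 1))) = 0 := by
      linarith
    rw [← hRel] at hv
    obtain ⟨n, hn⟩ := transGen_pow_entry_pos hA hv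
    have hterm : 0 < (((n + 1) ! : ℝ)⁻¹) * Matrix.trace (A ^ (n + 1)) := by
      refine mul_pos (by positivity) ?_
      refine Finset.sum_pos' (fun i _ => pow_entry_nonneg hA _ i i) ⟨v, Finset.mem_univ _, hn⟩
    have hle := Summable.le_tsum htail n (fun m _ => hnonneg (m + 1))
    linarith
  · intro h
    have : (∑' n : ℕ, (((n + 1) ! : ℝ)⁻¹) * Matrix.trace (A ^ (n + 1))) = 0 := by
      have : ∀ n : ℕ, (((n + 1) ! : ℝ)⁻¹) * Matrix.trace (A ^ (n + 1)) = 0 := by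
        intro n
        have hdiag : ∀ i : Fin d, (A ^ (n + 1)) i i = 0 := by
          intro i
          by_contra hne
          exact h i (hRel ▸ pow_entry_ne_zero_transGen hA n i i hne)
        simp [Matrix.trace, Matrix.diag, hdiag]
      simp [this]
    rw [this, add_zero]
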